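/- For all integers n and m, the n-twist disk D_n and the m-twist disk D_m are isotopic in B³ × [0,1]: there is an ambient isotopy F of B³ × [0,1] with F_1(D_n) = D_m. -/

import Mathlib

open Metric Set

noncomputable section

/-- Euclidean 3-space. -/
abbrev R3 := EuclideanSpace ℝ (Fin 3)

/-- The closed unit 3-ball `B³ ⊂ ℝ³`. -/
def B3 : Set R3 := closedBall 0 1
/-- The unit 2-sphere `S² = ∂B³ ⊂ ℝ³`. -/
def S2 : Set R3 := sphere (0 : R3) 1

/-- Rotation of `ℝ³` by angle `θ` about the `z`-axis. -/
noncomputable def rot (θ : ℝ) (x : R3) : R3 :=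
  (WithLp.equiv 2 (Fin 3 → ℝ)).symm
    ![Real.cos θ * x 0 - Real.sin θ * x 1,
      Real.sin θ * x 0 + Real.cos θ * x 1,
      x 2]

/-- The north pole `p₊ = (0,0,1)`. -/
noncomputable def pPlus : R3 := (WithLp.equiv 2 (Fin 3 → ℝ)).symm ![0, 0, 1]
/-- The south pole `p₋ = (0,0,-1)`. -/
noncomputable def pMinus : R3 := (WithLp.equiv 2 (Fin 3 → ℝ)).symm ![0, 0, -1]

/-- `A ⊂ B³` is a neatly embedded arc with endpoints the poles: the image of a smooth
embedding of `[0,1]` sending the endpoints to `p₊` and `p₋`, meeting `S² = ∂B³` exactly in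
`{p₊, p₋}` and transversally there (the velocity at each endpoint is not tangent to `S²`). -/
def IsNeatArc (A : Set R3) : Prop :=
  ∃ a : ℝ → R3,
    ContDiffOn ℝ (⊤ : ℕ∞) a (Icc 0 1) ∧
    InjOn a (Icc 0 1) ∧
    a '' Icc 0 1 = A ∧
    a 0 = pPlus ∧ a 1 = pMinus ∧
    A ⊆ B3 ∧
    A ∩ S2 = {pPlus, pMinus} ∧
    (∀ t ∈ Icc (0 : ℝ) 1, derivWithin a (Icc 0 1) t ≠ 0) ∧
    (inner ℝ pPlus (derivWithin a (Icc 0 1) 0) : ℝ) ≠ 0 ∧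
    (inner ℝ pMinus (derivWithin a (Icc 0 1) 1) : ℝ) ≠ 0

/-- The `n`-twist disk `D__n = {(ρ_{2πnt}(a), t) : a ∈ A, t ∈ [0,1]} ⊂ B³ × [0,1]`. -/
def twistDisk (A : Set R3) (n : ℤ) : Set (R3 × ℝ) :=
  {p | ∃ a ∈ A, ∃ t ∈ Icc (0 : ℝ) 1, p = (rot (2 * Real.pi * n * t) a, t)}

/-- The solid cylinder `B³ × [0,1] ⊂ ℝ³ × ℝ`. -/
def BI : Set (R3 × ℝ) := B3 ×ˢ Icc (0 : ℝ) 1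

/-- `f` restricts to a diffeomorphism of `B³ × [0,1]`. -/
def IsDiffeoOfBI (f : R3 × ℝ → R3 × ℝ) : Prop :=
  ContDiffOn ℝ (⊤ : ℕ∞) f BI ∧ f '' BI = BI ∧
    ∃ g : R3 × ℝ → R3 × ℝ, ContDiffOn ℝ (⊤ : ℕ∞) g BI ∧ g '' BI = BI ∧
      (∀ x ∈ BI, g (f x) = x) ∧ (∀ x ∈ BI, f (g x) = x)

/-- `F` is an ambient isotopy of `B³ × [0,1]`: a continuous family `F_s`, `s ∈ [0,1]`, of
diffeomorphisms of `B³ × [0,1]` with `F_0 = id`. -/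
def IsAmbientIsotopyOfBI (F : ℝ → R3 × ℝ → R3 × ℝ) : Prop :=
  ContinuousOn (fun p : ℝ × (R3 × ℝ) => F p.1 p.2) (Icc (0 : ℝ) 1 ×ˢ BI) ∧
  (∀ s ∈ Icc (0 : ℝ) 1, IsDiffeoOfBI (F s)) ∧
  (∀ x ∈ BI, F 0 x = x)


/-! ### Auxiliary lemmas for the proof -/

lemma rot_rot (θ φ : ℝ) (x : R3) : rot θ (rot φ x) = rot (θ + φ) x := by
  ext i
  fin_cases i <;>
    simp [rot, WithLp.equiv_symm_apply, PiLp.toLp_apply, Real.cos_add, Real.sin_add] <;> ring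

lemma rot_zero (x : R3) : rot 0 x = x := by
  ext i
  fin_cases i <;> simp [rot, WithLp.equiv_symm_apply, PiLp.toLp_apply]

lemma norm_rot (θ : ℝ) (x : R3) : ‖rot θ x‖ = ‖x‖ := by
  rw [EuclideanSpace.norm_eq, EuclideanSpace.norm_eq]
  congr 1
  simp [Fin.sum_univ_three, rot, WithLp.equiv_symm_apply, PiLp.toLp_apply, Real.norm_eq_abs, sq_abs]
  linear_combination (x 0 ^ 2 + x 1 ^ 2) * (Real.sin_sq_add_cos_sq θ)

lemma contDiff_rotAux : ContDiff ℝ (⊤ : ℕ∞) (fun p : ℝ × R3 => rot p.1 p.2) := by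
  have hcoord : ∀ i : Fin 3, ContDiff ℝ (⊤ : ℕ∞) (fun p : ℝ × R3 => p.2 i) := fun i =>
    (EuclideanSpace.proj i : R3 →L[ℝ] ℝ).contDiff.comp contDiff_snd
  have hcos : ContDiff ℝ (⊤ : ℕ∞) (fun p : ℝ × R3 => Real.cos p.1) :=
    Real.contDiff_cos.comp contDiff_fst
  have hsin : ContDiff ℝ (⊤ : ℕ∞) (fun p : ℝ × R3 => Real.sin p.1) :=
    Real.contDiff_sin.comp contDiff_fst
  have h : ContDiff ℝ (⊤ : ℕ∞) (fun p : ℝ × R3 =>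
      (![Real.cos p.1 * p.2 0 - Real.sin p.1 * p.2 1,
         Real.sin p.1 * p.2 0 + Real.cos p.1 * p.2 1,
         p.2 2] : Fin 3 → ℝ)) := by
    apply contDiff_pi.2
    intro i
    fin_cases i
    · simpa using (hcos.mul (hcoord 0)).sub (hsin.mul (hcoord 1))
    · simpa using (hsin.mul (hcoord 0)).add (hcos.mul (hcoord 1))
    · simpa using hcoord 2
  have := ((EuclideanSpace.equiv (Fin 3) ℝ).symm : (Fin 3 → ℝ) ≃L[ℝ] R3).contDiff.comp h
  convert this using 1
  rfl

/-- The level-`t` twisting map of the cylinder: `(x, t) ↦ (rot (c * t) x, t)`. -/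
noncomputable def twistMap (c : ℝ) (p : R3 × ℝ) : R3 × ℝ := (rot (c * p.2) p.1, p.2)

lemma contDiff_twistMap (c : ℝ) : ContDiff ℝ (⊤ : ℕ∞) (twistMap c) := by
  have h1 : ContDiff ℝ (⊤ : ℕ∞) (fun p : R3 × ℝ => ((c * p.2, p.1) : ℝ × R3)) :=
    ((contDiff_const.mul contDiff_snd).prodMk contDiff_fst)
  exact (contDiff_rotAux.comp h1).prodMk contDiff_snd

lemma twistMap_twistMap (c c' : ℝ) (p : R3 × ℝ) :
    twistMap c (twistMap c' p) = twistMap (c + c') p := by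
  simp only [twistMap, rot_rot]
  rw [show c * p.2 + c' * p.2 = (c + c') * p.2 by ring]

lemma twistMap_mem_BI (c : ℝ) {p : R3 × ℝ} (hp : p ∈ BI) : twistMap c p ∈ BI := by
  obtain ⟨h1, h2⟩ := hp
  refine ⟨?_, h2⟩
  simp only [twistMap]
  simpa [B3, mem_closedBall, dist_zero_right, norm_rot] using h1

lemma twistMap_image_BI (c : ℝ) : twistMap c '' BI = BI := by
  apply Subset.antisymm
  · rintro _ ⟨p, hp, rfl⟩
    exact twistMap_mem_BI c hp
  · intro p hp
    refine ⟨twistMap (-c) p, twistMap_mem_BI (-c) hp, ?_⟩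
    rw [twistMap_twistMap]
    simp [twistMap, rot_zero]

lemma isDiffeo_twistMap (c : ℝ) : IsDiffeoOfBI (twistMap c) := by
  refine ⟨(contDiff_twistMap c).contDiffOn, twistMap_image_BI c,
    twistMap (-c), (contDiff_twistMap (-c)).contDiffOn, twistMap_image_BI (-c), ?_, ?_⟩
  · intro x _
    rw [twistMap_twistMap]
    simp [twistMap, rot_zero]
  · intro x _
    rw [twistMap_twistMap]
    simp [twistMap, rot_zero]

/-- For all integers `n` and `m`, the `n`-twist disk and the `m`-twist disk are isotopic in
`B³ × [0,1]`: some ambient isotopy of `B³ × [0,1]` carries `D_n` to `D_m`. -/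
theorem twistDisks_isotopic (A : Set R3) (hA : IsNeatArc A) (n m : ℤ) :
    ∃ F : ℝ → R3 × ℝ → R3 × ℝ, IsAmbientIsotopyOfBI F ∧
      F 1 '' twistDisk A n = twistDisk A m := by
  refine ⟨fun s => twistMap (2 * Real.pi * (m - n) * s), ⟨?_, ?_, ?_⟩, ?_⟩
  · -- joint continuity
    have h1 : ContDiff ℝ (⊤ : ℕ∞) (fun q : ℝ × (R3 × ℝ) =>
        ((2 * Real.pi * (m - n) * q.1 * q.2.2, q.2.1) : ℝ × R3)) :=
      ((contDiff_const.mul contDiff_fst).mul (contDiff_snd.snd)).prodMk contDiff_snd.fst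
    exact (((contDiff_rotAux.comp h1).prodMk contDiff_snd.snd).continuous).continuousOn
  · intro s _
    exact isDiffeo_twistMap _
  · intro x _
    simp [twistMap, rot_zero]
  · -- image of the twist disk
    have key : ∀ (a : R3) (t : ℝ),
        twistMap (2 * Real.pi * (m - n) * 1) (rot (2 * Real.pi * n * t) a, t)
          = (rot (2 * Real.pi * m * t) a, t) := by
      intro a t
      simp only [twistMap, rot_rot]
      rw [show 2 * Real.pi * (↑m - ↑n) * 1 * t + 2 * Real.pi * ↑n * t
            = 2 * Real.pi * ↑m * t by push_cast; ring]
    ext p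
    constructor
    · rintro ⟨_, ⟨a, ha, t, ht, rfl⟩, rfl⟩
      exact ⟨a, ha, t, ht, (key a t)⟩
    · rintro ⟨a, ha, t, ht, rfl⟩
      exact ⟨(rot (2 * Real.pi * n * t) a, t), ⟨a, ha, t, ht, rfl⟩, key a t⟩


end
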